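/- arXiv:math/9906150 — 5 statements merged into one kernel-verified Lean document; each statement's English description precedes it below -/
import Mathlib

section
/- A uniform limit of continuous periodic functions ℝ → ℂ is almost periodic in the sense of Bohr: for every ε > 0, the set of ε-almost-periods {τ : sup_t |f(t+τ) − f(t)| ≤ ε} is relatively dense in ℝ. -/
/-!
The periods `k • p` of a `p`-periodic function `g` meet every interval of length `p`. If `f` is
uniformly `δ`-close to `g`, then every period of `g` is a `2δ`-almost-period of `f`, by the
triangle inequality through `g (t + τ) = g t`. Taking `g = F n` with `n` so large that `F n` is
`ε / 2`-close to `f` gives a relatively dense set of `ε`-almost-periods of `f`.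
-/

open Filter Set Function

variable {α E : Type*}

def IsAlmostPeriod [Add α] [PseudoMetricSpace E] (f : α → E) (ε : ℝ) (τ : α) : Prop :=
  ∀ t, dist (f (t + τ)) (f t) ≤ ε

theorem IsAlmostPeriod.of_dist_le [Add α] [PseudoMetricSpace E] {f g : α → E} {δ η : ℝ} {τ : α}
    (hg : IsAlmostPeriod g η τ) (hfg : ∀ t, dist (f t) (g t) ≤ δ) :
    IsAlmostPeriod f (δ + η + δ) τ := fun t =>
  calc dist (f (t + τ)) (f t)
      ≤ dist (f (t + τ)) (g (t + τ)) + dist (g (t + τ)) (g t) + dist (g t) (f t) :=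
        dist_triangle4 _ _ _ _
    _ ≤ δ + η + δ := by
        gcongr
        · exact hfg _
        · exact hg t
        · rw [dist_comm]; exact hfg t

theorem Function.Periodic.isAlmostPeriod_zero [Add α] [PseudoMetricSpace E] {g : α → E} {τ : α}
    (hg : Periodic g τ) : IsAlmostPeriod g 0 τ := fun t => by
  rw [hg t, dist_self]

theorem exists_zsmul_mem_Icc [AddCommGroup α] [LinearOrder α] [IsOrderedAddMonoid α]
    [Archimedean α] {p : α} (hp : 0 < p) (a : α) : ∃ k : ℤ, k • p ∈ Icc a (a + p) := by
  obtain ⟨k, hk, -⟩ := existsUnique_add_zsmul_mem_Ico hp 0 a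
  exact ⟨k, Ico_subset_Icc_self (by simpa using hk)⟩

theorem exists_isAlmostPeriod_mem_Icc_of_periodic [AddCommGroup α] [LinearOrder α]
    [IsOrderedAddMonoid α] [Archimedean α] [PseudoMetricSpace E] {f g : α → E} {p : α} {δ : ℝ}
    (hg : Periodic g p) (hp : 0 < p) (hfg : ∀ t, dist (f t) (g t) ≤ δ) (a : α) :
    ∃ τ ∈ Icc a (a + p), IsAlmostPeriod f (2 * δ) τ := by
  obtain ⟨k, hk⟩ := exists_zsmul_mem_Icc hp a
  refine ⟨k • p, hk, ?_⟩
  have := (hg.zsmul k).isAlmostPeriod_zero.of_dist_le hfg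
  rwa [add_zero, ← two_mul] at this

theorem limit_periodic_is_almost_periodic_general
    (f : ℝ → ℂ) (F : ℕ → ℝ → ℂ) (p : ℕ → ℝ)
    (hp : ∀ n, 0 < p n)
    (hper : ∀ n, Function.Periodic (F n) (p n))
    (hunif : TendstoUniformly F f atTop) :
    ∀ ε > (0:ℝ), ∃ L > (0:ℝ), ∀ a : ℝ, ∃ τ ∈ Set.Icc a (a + L),
      ∀ t : ℝ, ‖f (t + τ) - f t‖ ≤ ε := by
  intro ε hε
  obtain ⟨n, hn⟩ := (Metric.tendstoUniformly_iff.mp hunif (ε / 2) (half_pos hε)).exists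
  have hclose : ∀ t, dist (f t) (F n t) ≤ ε / 2 := fun t => (hn t).le
  refine ⟨p n, hp n, fun a => ?_⟩
  obtain ⟨τ, hτ, hfτ⟩ := exists_isAlmostPeriod_mem_Icc_of_periodic (hper n) (hp n) hclose a
  refine ⟨τ, hτ, fun t => ?_⟩
  calc ‖f (t + τ) - f t‖ = dist (f (t + τ)) (f t) := (dist_eq_norm _ _).symm
    _ ≤ 2 * (ε / 2) := hfτ t
    _ = ε := mul_div_cancel₀ ε two_ne_zero

/-- A uniform limit of continuous periodic functions `ℝ → ℂ` is Bohr almost periodic: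
for every `ε > 0` the set of `ε`-almost-periods is relatively dense in `ℝ`. -/
theorem limit_periodic_is_almost_periodic
    (f : ℝ → ℂ) (F : ℕ → ℝ → ℂ) (p : ℕ → ℝ)
    (hcont : ∀ n, Continuous (F n)) (hp : ∀ n, 0 < p n)
    (hper : ∀ n, Function.Periodic (F n) (p n))
    (hunif : TendstoUniformly F f atTop) :
    ∀ ε > (0:ℝ), ∃ L > (0:ℝ), ∀ a : ℝ, ∃ τ ∈ Set.Icc a (a + L),
      ∀ t : ℝ, ‖f (t + τ) - f t‖ ≤ ε :=
  limit_periodic_is_almost_periodic_general f F p hp hper hunif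
end

section
/- Let f : ℝ → ℂ be a uniform limit of continuous periodic functions f_n, each having mean value M{f_n}. Then the mean value M{f} = lim_{T→∞}(1/T)∫₀^T f(t)dt exists and equals lim_{n→∞} M{f_n}. -/
set_option maxHeartbeats 800000


open Filter MeasureTheory intervalIntegral

private lemma avg_dist_le' {g h : ℝ → ℂ} (hg : Continuous g) (hh : Continuous h)
    {C : ℝ} (hgh : ∀ t, ‖g t - h t‖ ≤ C) {T : ℝ} (hT : 0 < T) :
    ‖(T:ℂ)⁻¹ * (∫ t in (0:ℝ)..T, g t) - (T:ℂ)⁻¹ * ∫ t in (0:ℝ)..T, h t‖ ≤ C := by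
  rw [← mul_sub, ← intervalIntegral.integral_sub (hg.intervalIntegrable _ _)
    (hh.intervalIntegrable _ _), norm_mul]
  have h1 : ‖(T:ℂ)⁻¹‖ = T⁻¹ := by
    rw [norm_inv, Complex.norm_real, Real.norm_eq_abs, abs_of_pos hT]
  have h2 : ‖∫ t in (0:ℝ)..T, (g t - h t)‖ ≤ C * |T - 0| :=
    intervalIntegral.norm_integral_le_of_norm_le_const (fun t _ => hgh t)
  rw [sub_zero, abs_of_pos hT] at h2
  calc ‖(T:ℂ)⁻¹‖ * ‖∫ t in (0:ℝ)..T, (g t - h t)‖ ≤ T⁻¹ * (C * T) := by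
        rw [h1]; exact mul_le_mul_of_nonneg_left h2 (by positivity)
    _ = C := by field_simp

/-- If continuous periodic functions `F n` with mean values `M n` converge uniformly to `f`,
then `f` has a mean value, equal to `lim_n M n`. -/
theorem mean_value_of_uniform_limit_of_periodic
    (f : ℝ → ℂ) (F : ℕ → ℝ → ℂ) (p : ℕ → ℝ) (M : ℕ → ℂ)
    (hcont : ∀ n, Continuous (F n)) (hp : ∀ n, 0 < p n)
    (hper : ∀ n, Function.Periodic (F n) (p n))
    (hM : ∀ n, Tendsto (fun T : ℝ => (T : ℂ)⁻¹ * ∫ t in (0:ℝ)..T, F n t) atTop (nhds (M n)))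
    (hunif : TendstoUniformly F f atTop) :
    ∃ Mf : ℂ, Tendsto (fun T : ℝ => (T : ℂ)⁻¹ * ∫ t in (0:ℝ)..T, f t) atTop (nhds Mf) ∧
      Tendsto M atTop (nhds Mf) := by
  have hfc : Continuous f := hunif.continuous (Eventually.of_forall hcont).frequently
  have hunif' := Metric.tendstoUniformly_iff.mp hunif
  -- M is Cauchy
  have hcauchy : CauchySeq M := by
    rw [Metric.cauchySeq_iff]
    intro ε hε
    obtain ⟨N, hN⟩ := (eventually_atTop.mp (hunif' (ε/3) (by linarith)))
    refine ⟨N, fun n hn m hm => ?_⟩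
    have hbound : ∀ t, ‖F n t - F m t‖ ≤ 2 * (ε/3) := by
      intro t
      have h1 := hN n hn t
      have h2 := hN m hm t
      rw [dist_comm] at h1
      have := dist_triangle (F n t) (f t) (F m t)
      rw [dist_eq_norm] at h1 h2
      simp only [dist_eq_norm] at this
      linarith
    have hlim : Tendsto (fun T : ℝ =>
        dist ((T : ℂ)⁻¹ * ∫ t in (0:ℝ)..T, F n t) ((T : ℂ)⁻¹ * (∫ t in (0:ℝ)..T, F m t)))
        atTop (nhds (dist (M n) (M m))) := (hM n).dist (hM m)
    have hle : dist (M n) (M m) ≤ 2 * (ε/3) := by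
      refine le_of_tendsto hlim ((eventually_gt_atTop (0:ℝ)).mono fun T hT => ?_)
      rw [dist_eq_norm]
      exact avg_dist_le' (hcont n) (hcont m) hbound hT
    calc dist (M n) (M m) ≤ 2 * (ε/3) := hle
      _ < ε := by linarith
  obtain ⟨Mf, hMf⟩ := cauchySeq_tendsto_of_complete hcauchy
  refine ⟨Mf, ?_, hMf⟩
  rw [Metric.tendsto_nhds]
  intro ε hε
  obtain ⟨N₁, hN₁⟩ := eventually_atTop.mp (hunif' (ε/3) (by linarith))
  obtain ⟨N₂, hN₂⟩ := Metric.tendsto_atTop.mp hMf (ε/3) (by linarith)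
  set n := max N₁ N₂
  have h1 : ∀ t, ‖f t - F n t‖ ≤ ε/3 := fun t => by
    have := hN₁ n (le_max_left _ _) t
    rw [dist_eq_norm] at this; linarith
  have h2 : dist (M n) Mf < ε/3 := hN₂ n (le_max_right _ _)
  have h3 := Metric.tendsto_nhds.mp (hM n) (ε/3) (by linarith)
  filter_upwards [h3, eventually_gt_atTop (0:ℝ)] with T hT3 hT0
  have h4 : dist ((T : ℂ)⁻¹ * ∫ t in (0:ℝ)..T, f t)
      ((T : ℂ)⁻¹ * ∫ t in (0:ℝ)..T, F n t) ≤ ε/3 := by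
    rw [dist_eq_norm]
    exact avg_dist_le' hfc (hcont n) h1 hT0
  have htri := dist_triangle4 ((T : ℂ)⁻¹ * ∫ t in (0:ℝ)..T, f t)
    ((T : ℂ)⁻¹ * ∫ t in (0:ℝ)..T, F n t) (M n) Mf
  linarith
end

section
/- For the function ρ(t) = Σ_{j=1}^∞ 2^{-j} exp(2πi t / 2^j) (a uniformly convergent series of periodic functions), the integral T ↦ ∫₀^T ρ(t) dt is unbounded on ℝ. -/
open Filter MeasureTheory intervalIntegral Real

/-- `‖e^{iθ} - 1‖ ≤ |θ|`. -/
lemma norm_exp_mul_I_sub_one_le (θ : ℝ) :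
    ‖Complex.exp (θ * Complex.I) - 1‖ ≤ |θ| := by
  have hz : Complex.exp (θ * Complex.I) - 1
      = Complex.ofReal (Real.cos θ - 1) + Complex.ofReal (Real.sin θ) * Complex.I := by
    rw [Complex.exp_mul_I]; push_cast; ring
  have hsq : ‖Complex.exp (θ * Complex.I) - 1‖ ^ 2 = 2 - 2 * Real.cos θ := by
    have h0 : ‖Complex.exp (θ * Complex.I) - 1‖ ^ 2
        = Complex.normSq (Complex.exp (θ * Complex.I) - 1) := by
      rw [Complex.sq_norm]
    rw [h0, hz, Complex.normSq_add_mul_I]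
    nlinarith [Real.sin_sq_add_cos_sq θ]
  have h1 : Real.sin (θ / 2) ^ 2 ≤ (θ / 2) ^ 2 := Real.sin_sq_le_sq
  have h2 : Real.sin (θ / 2) ^ 2 = 1 / 2 - Real.cos θ / 2 := by
    have := Real.sin_sq_eq_half_sub (θ / 2)
    rw [show 2 * (θ / 2) = θ by ring] at this
    linarith
  have h3 : ‖Complex.exp (θ * Complex.I) - 1‖ ^ 2 ≤ |θ| ^ 2 := by
    rw [hsq, sq_abs]; nlinarith
  have h4 : (0:ℝ) ≤ ‖Complex.exp (θ * Complex.I) - 1‖ := norm_nonneg _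
  nlinarith [abs_nonneg θ]

lemma rho_exponent_eq (j : ℕ) (t : ℝ) :
    2 * (π : ℂ) * Complex.I * t / 2 ^ (j + 1)
      = ((2 * π * t / 2 ^ (j + 1) : ℝ) : ℂ) * Complex.I := by
  push_cast; ring

lemma rho_term_norm (j : ℕ) (t : ℝ) :
    ‖((1 : ℂ) / 2 ^ (j + 1)) * Complex.exp (2 * π * Complex.I * t / 2 ^ (j + 1))‖
      = (1 / 2 : ℝ) ^ (j + 1) := by
  rw [norm_mul, rho_exponent_eq, Complex.norm_exp_ofReal_mul_I, mul_one]
  simp [norm_div]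

lemma halfpow_summable : Summable (fun j : ℕ => (1 / 2 : ℝ) ^ (j + 1)) := by
  simpa only [pow_succ] using
    ((summable_geometric_of_lt_one (by norm_num) (by norm_num)).mul_right (1 / 2 : ℝ))

lemma rho_norm_bound (T : ℝ) (j : ℕ) :
    ‖Complex.exp (2 * π * Complex.I * T / 2 ^ (j + 1)) - 1‖
      ≤ (2 * π * |T|) * (1 / 2 : ℝ) ^ (j + 1) := by
  rw [rho_exponent_eq]
  calc ‖Complex.exp (((2 * π * T / 2 ^ (j+1) : ℝ) : ℂ) * Complex.I) - 1‖
      ≤ |2 * π * T / 2 ^ (j+1)| := norm_exp_mul_I_sub_one_le _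
    _ = 2 * π * |T| / 2 ^ (j+1) := by
        rw [abs_div, abs_mul, abs_mul, abs_two, abs_of_nonneg Real.pi_pos.le,
          abs_of_nonneg (by positivity : (0:ℝ) ≤ 2 ^ (j+1))]
    _ = (2 * π * |T|) * (1 / 2 : ℝ) ^ (j + 1) := by
        rw [div_pow, one_pow]; ring

lemma rho_norm_summable (T : ℝ) :
    Summable (fun j : ℕ => ‖Complex.exp (2 * π * Complex.I * T / 2 ^ (j + 1)) - 1‖) :=
  Summable.of_nonneg_of_le (fun _ => norm_nonneg _) (fun j => rho_norm_bound T j)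
    (halfpow_summable.mul_left _)

lemma rho_summand_summable (T : ℝ) :
    Summable (fun j : ℕ => Complex.exp (2 * π * Complex.I * T / 2 ^ (j + 1)) - 1) :=
  Summable.of_norm (rho_norm_summable T)

lemma rho_integral (T : ℝ) (hT : 0 ≤ T) :
    (∫ t in (0:ℝ)..T,
      (∑' j : ℕ, ((1 : ℂ) / 2 ^ (j + 1)) *
        Complex.exp (2 * π * Complex.I * t / 2 ^ (j + 1))))
    = ∑' j : ℕ,
        (Complex.exp (2 * π * Complex.I * T / 2 ^ (j + 1)) - 1) / (2 * π * Complex.I) := by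
  have hmeas : ∀ j : ℕ, AEStronglyMeasurable
      (fun t : ℝ => ((1 : ℂ) / 2 ^ (j + 1)) * Complex.exp (2 * π * Complex.I * t / 2 ^ (j + 1)))
      (volume.restrict (Set.Ioc 0 T)) := by
    intro j
    apply Continuous.aestronglyMeasurable
    fun_prop
  have hsummable : Summable (fun j : ℕ => (1 / 2 : ℝ) ^ (j + 1) * T) :=
    halfpow_summable.mul_right T
  have hlint : ∑' j : ℕ, ∫⁻ t in Set.Ioc (0:ℝ) T,
      ‖((1 : ℂ) / 2 ^ (j + 1)) * Complex.exp (2 * π * Complex.I * t / 2 ^ (j + 1))‖₊ ≠ ⊤ := by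
    have heq : ∀ j : ℕ, (∫⁻ t in Set.Ioc (0:ℝ) T,
        ‖((1 : ℂ) / 2 ^ (j + 1)) * Complex.exp (2 * π * Complex.I * t / 2 ^ (j + 1))‖₊)
        = ENNReal.ofReal ((1 / 2 : ℝ) ^ (j + 1) * T) := by
      intro j
      have hpt : ∀ t : ℝ,
          (‖((1 : ℂ) / 2 ^ (j + 1)) * Complex.exp (2 * π * Complex.I * t / 2 ^ (j + 1))‖₊ : ENNReal)
          = ENNReal.ofReal ((1 / 2 : ℝ) ^ (j + 1)) := by
        intro t
        rw [← enorm_eq_nnnorm, ← ofReal_norm, rho_term_norm]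
      simp_rw [hpt]
      rw [MeasureTheory.lintegral_const, Measure.restrict_apply MeasurableSet.univ,
        Set.univ_inter, Real.volume_Ioc, sub_zero, ← ENNReal.ofReal_mul (by positivity)]
    simp_rw [heq]
    rw [← ENNReal.ofReal_tsum_of_nonneg (fun j => by positivity) hsummable]
    exact ENNReal.ofReal_ne_top
  rw [intervalIntegral.integral_of_le hT, MeasureTheory.integral_tsum hmeas hlint]
  refine tsum_congr fun j => ?_
  have h2 : ((2:ℂ) ^ (j+1)) ≠ 0 := pow_ne_zero _ two_ne_zero
  have hπc : ((π:ℝ):ℂ) ≠ 0 := Complex.ofReal_ne_zero.mpr Real.pi_ne_zero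
  have hc : ((2:ℂ) * π * Complex.I / 2 ^ (j+1)) ≠ 0 :=
    div_ne_zero (mul_ne_zero (mul_ne_zero two_ne_zero hπc) Complex.I_ne_zero) h2
  have hrw : ∀ t : ℝ, 2 * (π:ℂ) * Complex.I * t / 2 ^ (j+1)
      = (2 * (π:ℂ) * Complex.I / 2 ^ (j+1)) * t := fun t => by ring
  rw [← intervalIntegral.integral_of_le hT]
  simp_rw [hrw]
  rw [intervalIntegral.integral_const_mul, integral_exp_mul_complex hc]
  rw [Complex.ofReal_zero, mul_zero, Complex.exp_zero]
  field_simp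

lemma cos_aux (m : ℕ) : Real.cos (2 * π * 2 ^ m / 3) = -(1/2) := by
  have h3 : ¬ (3 ∣ 2 ^ m) := by
    intro h
    have := Nat.Prime.dvd_of_dvd_pow Nat.prime_three h
    norm_num at this
  have hrlt : 2 ^ m % 3 < 3 := Nat.mod_lt _ (by norm_num)
  have hdiv := Nat.div_add_mod (2 ^ m) 3
  set q := 2 ^ m / 3 with hq
  set r := 2 ^ m % 3 with hr
  have hr0 : r ≠ 0 := fun h => h3 (Nat.dvd_of_mod_eq_zero h)
  have hx : (2 * π * 2 ^ m / 3 : ℝ) = 2 * π * r / 3 + (q : ℤ) * (2 * π) := by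
    have h2 : ((2:ℝ)) ^ m = 3 * (q:ℝ) + (r:ℝ) := by exact_mod_cast hdiv.symm
    rw [h2]; push_cast; ring
  rw [hx, Real.cos_add_int_mul_two_pi]
  have hr12 : r = 1 ∨ r = 2 := by omega
  rcases hr12 with h | h <;> rw [h]
  · rw [show (2 * π * (1:ℕ) / 3 : ℝ) = π - π / 3 by push_cast; ring,
      Real.cos_pi_sub, Real.cos_pi_div_three]
  · rw [show (2 * π * (2:ℕ) / 3 : ℝ) = 2 * π - 2 * π / 3 by push_cast; ring,
      Real.cos_two_pi_sub, show (2 * π / 3 : ℝ) = π - π / 3 by ring,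
      Real.cos_pi_sub, Real.cos_pi_div_three]

lemma rho_re (j : ℕ) (t : ℝ) :
    (Complex.exp (2 * π * Complex.I * t / 2 ^ (j + 1)) - 1).re
      = Real.cos (2 * π * t / 2 ^ (j + 1)) - 1 := by
  rw [rho_exponent_eq, Complex.sub_re, Complex.one_re, Complex.exp_ofReal_mul_I_re]

set_option maxHeartbeats 1000000 in
lemma rho_sum_lower (n : ℕ) :
    (3/2 : ℝ) * (n+1) - 2 * π / 3
      ≤ ‖∑' j : ℕ,
          (Complex.exp (2 * π * Complex.I * ((2 ^ (n+1) / 3 : ℝ) : ℂ) / 2 ^ (j + 1)) - 1)‖ := by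
  set T : ℝ := 2 ^ (n+1) / 3 with hT
  set g : ℕ → ℂ := fun j => Complex.exp (2 * π * Complex.I * (T:ℂ) / 2 ^ (j + 1)) - 1 with hg
  have hsum : Summable g := rho_summand_summable T
  have hnormsum : Summable (fun j => ‖g j‖) := rho_norm_summable T
  have hresum : Summable (fun j => (g j).re) := by
    refine Summable.of_abs (Summable.of_nonneg_of_le (fun j => abs_nonneg _)
      (fun j => ?_) hnormsum)
    exact Complex.abs_re_le_norm _
  have hre : (∑' j, g j).re = ∑' j, (g j).re := Complex.re_tsum hsum
  have hsplit := Summable.sum_add_tsum_nat_add (n+1) hresum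
  have hfin : ∀ j ∈ Finset.range (n+1), (g j).re = -(3/2 : ℝ) := by
    intro j hj
    have hj' : j ≤ n := Nat.lt_succ_iff.mp (Finset.mem_range.mp hj)
    simp only [hg]
    rw [rho_re]
    have harg : 2 * π * T / 2 ^ (j+1) = 2 * π * 2 ^ (n-j) / 3 := by
      rw [hT]
      have hpow : (2:ℝ) ^ (n+1) = 2 ^ (n-j) * 2 ^ (j+1) := by
        rw [← pow_add]; congr 1; omega
      rw [hpow]; field_simp
    rw [harg, cos_aux]; norm_num
  have htail_abs : Summable (fun k => |(g (k + (n+1))).re|) :=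
    ((summable_nat_add_iff (n+1)).2 hresum).abs
  have hb : ∀ k : ℕ, |(g (k + (n+1))).re| ≤ (π/3) * (1/2 : ℝ) ^ k := by
    intro k
    have h1 : |(g (k+(n+1))).re| ≤ ‖g (k+(n+1))‖ := by
      exact Complex.abs_re_le_norm _
    refine h1.trans ((rho_norm_bound T (k+(n+1))).trans (le_of_eq ?_))
    rw [hT, abs_of_nonneg (by positivity : (0:ℝ) ≤ 2 ^ (n+1) / 3)]
    have h2 : ((2:ℝ) ^ (n+1)) * ((1/2 : ℝ) ^ (n+1)) = 1 := by
      rw [← mul_pow]; norm_num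
    have h3 : (1/2 : ℝ) ^ (k + (n+1) + 1)
        = (1/2 : ℝ) ^ (n+1) * ((1/2 : ℝ) ^ k * (1/2 : ℝ) ^ 1) := by
      rw [← pow_add, ← pow_add]; congr 1; omega
    calc (2 * π * (2 ^ (n+1) / 3)) * ((1/2 : ℝ) ^ (k + (n+1) + 1))
        = (2 * π / 3 * (1/2)) * (((2:ℝ) ^ (n+1)) * ((1/2 : ℝ) ^ (n+1))) * (1/2 : ℝ) ^ k := by
          rw [h3]; ring
      _ = (π/3) * (1/2 : ℝ) ^ k := by rw [h2]; ring
  have htailbound : |∑' k, (g (k + (n+1))).re| ≤ 2 * π / 3 := by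
    have hns : Summable (fun k => ‖(g (k + (n+1))).re‖) := by
      simpa only [Real.norm_eq_abs] using htail_abs
    have habs := norm_tsum_le_tsum_norm hns
    simp only [Real.norm_eq_abs] at habs
    calc |∑' k, (g (k + (n+1))).re| ≤ ∑' k, |(g (k + (n+1))).re| := habs
      _ ≤ ∑' k, (π/3) * (1/2 : ℝ) ^ k :=
          Summable.tsum_le_tsum hb htail_abs
            ((summable_geometric_of_lt_one (by norm_num) (by norm_num)).mul_left _)
      _ = (π/3) * 2 := by
          rw [tsum_mul_left, tsum_geometric_of_lt_one (by norm_num) (by norm_num)]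
          norm_num
      _ = 2 * π / 3 := by ring
  have h1 : (∑' j, g j).re = -((3:ℝ)/2) * (n+1) + ∑' k, (g (k + (n+1))).re := by
    rw [hre, ← hsplit, Finset.sum_congr rfl hfin, Finset.sum_const, Finset.card_range,
      nsmul_eq_mul]
    push_cast
    ring
  have h3 : (∑' j, g j).re ≤ -((3:ℝ)/2) * (n+1) + 2 * π / 3 := by
    rw [h1]; linarith [(abs_le.mp htailbound).2]
  calc (3/2 : ℝ) * (n+1) - 2 * π / 3 ≤ -(∑' j, g j).re := by linarith
    _ ≤ |(∑' j, g j).re| := neg_le_abs _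
    _ ≤ ‖∑' j, g j‖ := by exact Complex.abs_re_le_norm _

/-- For `ρ(t) = Σ_{j=1}^∞ 2^{-j} exp(2πi t / 2^j)`, the integral `T ↦ ∫₀^T ρ(t) dt` is
unbounded on `ℝ`. -/
theorem integral_of_rho_unbounded :
    ¬ ∃ C : ℝ, ∀ T : ℝ,
      ‖∫ t in (0:ℝ)..T,
        (∑' j : ℕ, ((1 : ℂ) / 2 ^ (j + 1)) *
          Complex.exp (2 * π * Complex.I * t / 2 ^ (j + 1)))‖ ≤ C := by
  rintro ⟨C, hC⟩
  have hπ := Real.pi_pos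
  obtain ⟨n, hn⟩ := exists_nat_gt ((2 * π * C + 2 * π / 3) * (2/3))
  set T : ℝ := 2 ^ (n+1) / 3 with hT
  have h0T : (0:ℝ) ≤ T := by positivity
  have key := rho_integral T h0T
  have hCT := hC T
  rw [key, tsum_div_const, norm_div] at hCT
  have hnd : ‖(2 * (π:ℂ) * Complex.I)‖ = 2 * π := by
    simp [map_mul, Complex.norm_I, Complex.norm_real,
      abs_of_nonneg hπ.le]
  rw [hnd] at hCT
  have hlow := rho_sum_lower n
  rw [← hT] at hlow
  rw [div_le_iff₀ (by positivity)] at hCT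
  nlinarith [hn, hπ, hlow.trans hCT]
end

section
/- The map t ↦ ⟨exp(2πit), exp(2πit/n₁), exp(2πit/(n₁n₂)), ...⟩ is an injective continuous group homomorphism from (ℝ,+) into the solenoid Σ_N, and its image is the path component of the identity. -/
open Real

namespace SolenoidPaper

/-- The solenoid over `N`, as the closed subgroup of `∏ S¹` of sequences with
`z j = z (j+1) ^ N j`. -/
noncomputable def solenoid (N : ℕ → ℕ) : Subgroup (∀ _ : ℕ, Circle) where
  carrier := {z | ∀ j, z j = z (j + 1) ^ N j}
  mul_mem' := by
    intro a b ha hb j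
    simp only [Pi.mul_apply, mul_pow]
    rw [← ha j, ← hb j]
  one_mem' := by intro j; simp
  inv_mem' := by
    intro a ha j
    simp only [Pi.inv_apply, inv_pow]
    rw [← ha j]

/-- The one-parameter subgroup `t ↦ ⟨exp(2πit/(n₀⋯n_{j-1}))⟩_j` of the solenoid. -/
noncomputable def piN (N : ℕ → ℕ) (t : ℝ) : ∀ _ : ℕ, Circle :=
  fun j => Circle.exp (2 * π * t / ∏ i ∈ Finset.range j, (N i : ℝ))

lemma circle_exp_nat_mul (n : ℕ) (x : ℝ) : Circle.exp x ^ n = Circle.exp (n * x) := by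
  induction n with
  | zero => simp
  | succ k ih =>
    rw [pow_succ, ih, ← Circle.exp_add]
    congr 1
    push_cast
    ring

lemma piN_mem (N : ℕ → ℕ) (hN : ∀ j, 1 ≤ N j) (t : ℝ) : piN N t ∈ solenoid N := by
  intro j
  have hne : (∏ i ∈ Finset.range j, (N i : ℝ)) ≠ 0 := by
    refine Finset.prod_ne_zero_iff.mpr fun i _ => ?_
    have := hN i; positivity
  have hNj : (N j : ℝ) ≠ 0 := by have := hN j; positivity
  show Circle.exp _ = Circle.exp _ ^ N j
  rw [circle_exp_nat_mul]
  congr 1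
  rw [Finset.prod_range_succ]
  field_simp

/-!
`π_N` is a homomorphism coordinatewise, and it is injective because `π_N(u) = 1` forces
`u ∈ n₁⋯n_j ℤ` for every `j`, while these products grow at least like `2^j`. A path from `1`
to `y` in `Σ_N` is lifted coordinatewise through the covering `Circle.exp : ℝ → S¹`; by
uniqueness of lifts the lift of the `j`-th coordinate is `n_j` times that of the `(j+1)`-st,
so all of them are determined by the lift `θ` of the zeroth coordinate, and
`y = π_N(θ(1) / 2π)`.
-/

open Set unitInterval

lemma eq_natCast_mul_of_circleExp_eq_pow {A : Type*} [TopologicalSpace A] [PreconnectedSpace A]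
    {θ φ : A → ℝ} (hθ : Continuous θ) (hφ : Continuous φ) (n : ℕ)
    (h : ∀ a, Circle.exp (θ a) = Circle.exp (φ a) ^ n) {a₀ : A} (h₀ : θ a₀ = n * φ a₀) :
    θ = fun a => n * φ a :=
  Circle.isCoveringMap_exp.eq_of_comp_eq hθ (continuous_const.mul hφ)
    (funext fun a => by simp [h]) a₀ h₀

section

variable (N : ℕ → ℕ)

lemma piN_apply (t : ℝ) (j : ℕ) :
    piN N t j = Circle.exp (2 * π * t / ∏ i ∈ Finset.range j, (N i : ℝ)) :=
  rfl

lemma piN_zero : piN N 0 = 1 := by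
  ext1 j
  simp [piN_apply]

lemma piN_add (s t : ℝ) : piN N (s + t) = piN N s * piN N t := by
  ext1 j
  simp only [piN_apply, Pi.mul_apply, ← Circle.exp_add]
  ring_nf

lemma continuous_piN : Continuous (piN N) :=
  continuous_pi fun _ => Circle.exp.continuous.comp ((continuous_const_mul _).div_const _)

lemma piN_apply_eq_one_iff {j : ℕ} (hP : ∏ i ∈ Finset.range j, (N i : ℝ) ≠ 0) (u : ℝ) :
    piN N u j = 1 ↔ ∃ n : ℤ, u = n * ∏ i ∈ Finset.range j, (N i : ℝ) := by
  rw [piN_apply, Circle.exp_eq_one]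
  refine exists_congr fun n => ?_
  rw [div_eq_iff hP, mul_comm (n : ℝ), mul_assoc (2 * π) (n : ℝ), mul_right_inj' two_pi_pos.ne']

lemma two_pow_le_prod_range (hN : ∀ j, 2 ≤ N j) (j : ℕ) :
    (2 : ℝ) ^ j ≤ ∏ i ∈ Finset.range j, (N i : ℝ) := by
  exact_mod_cast by simpa using Finset.pow_card_le_prod (Finset.range j) N 2 fun i _ => hN i

lemma piN_eq_one_iff (hN : ∀ j, 2 ≤ N j) {u : ℝ} : piN N u = 1 ↔ u = 0 := by
  refine ⟨fun hu => ?_, fun hu => hu ▸ piN_zero N⟩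
  obtain ⟨j, hj⟩ := pow_unbounded_of_one_lt |u| (one_lt_two (α := ℝ))
  have hP := two_pow_le_prod_range N hN j
  have hP₀ : 0 < ∏ i ∈ Finset.range j, (N i : ℝ) := (pow_pos two_pos j).trans_le hP
  obtain ⟨n, rfl⟩ := (piN_apply_eq_one_iff N hP₀.ne' u).1 (congrFun hu j)
  suffices n = 0 by simp [this]
  by_contra hn
  have h₁ : (1 : ℝ) ≤ |(n : ℝ)| := by exact_mod_cast Int.one_le_abs hn
  rw [abs_mul, abs_of_pos hP₀] at hj
  nlinarith

lemma piN_injective (hN : ∀ j, 2 ≤ N j) : Function.Injective (piN N) := by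
  intro s t hst
  have h := piN_add N (s - t) t
  rw [sub_add_cancel, hst, right_eq_mul] at h
  exact sub_eq_zero.1 ((piN_eq_one_iff N hN).1 h)

lemma exists_piN_eq_of_joined (hN : ∀ j, 1 ≤ N j) {y : solenoid N} (hy : Joined 1 y) :
    ∃ t, piN N t = y := by
  obtain ⟨γ⟩ := hy
  have hlift : ∀ j, ∃ θ : C(I, ℝ), Circle.exp ∘ θ = (fun s => (γ s).1 j) ∧ θ 0 = 0 := fun j =>
    Circle.isCoveringMap_exp.exists_path_lifts ⟨fun s => (γ s).1 j,
      (continuous_apply j).comp (continuous_subtype_val.comp γ.continuous)⟩ 0 (by simp)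
  choose θ hθ hθ₀ using hlift
  have hθ' : ∀ j s, Circle.exp (θ j s) = (γ s).1 j := fun j => congrFun (hθ j)
  have hstep : ∀ j s, θ j s = N j * θ (j + 1) s := fun j =>
    congrFun (eq_natCast_mul_of_circleExp_eq_pow (θ j).continuous (θ (j + 1)).continuous (N j)
      (fun s => by rw [hθ', hθ']; exact (γ s).2 j)
      (a₀ := 0) (by simp [hθ₀]))
  have hprod : ∀ j s, θ 0 s = (∏ i ∈ Finset.range j, (N i : ℝ)) * θ j s := by
    intro j s
    induction j with
    | zero => simp
    | succ j ih => rw [ih, hstep j, Finset.prod_range_succ, mul_assoc]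
  refine ⟨θ 0 1 / (2 * π), funext fun j => ?_⟩
  have hP : ∏ i ∈ Finset.range j, (N i : ℝ) ≠ 0 :=
    (Finset.prod_pos fun i _ => Nat.cast_pos.2 (hN i)).ne'
  rw [piN_apply, mul_div_cancel₀ _ two_pi_pos.ne', hprod j, mul_div_cancel_left₀ _ hP, hθ',
    γ.target]

lemma range_piN_eq_pathComponent (hN : ∀ j, 1 ≤ N j) :
    range (fun t : ℝ => (⟨piN N t, piN_mem N hN t⟩ : solenoid N)) = pathComponent 1 := by
  ext y
  constructor
  · rintro ⟨t, rfl⟩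
    have h := (PathConnectedSpace.joined (0 : ℝ) t).map
      ((continuous_piN N).subtype_mk (piN_mem N hN))
    rwa [show (⟨piN N 0, _⟩ : solenoid N) = 1 from Subtype.ext (piN_zero N)] at h
  · intro hy
    obtain ⟨t, ht⟩ := exists_piN_eq_of_joined N hN hy
    exact ⟨t, Subtype.ext ht⟩

end

/-- `π_N` is an injective continuous group homomorphism `(ℝ,+) → Σ_N` whose image is the
path component of the identity of the solenoid. -/
theorem piN_injective_continuous_hom_range_eq_pathComponent
    (N : ℕ → ℕ) (hN : ∀ j, 2 ≤ N j) :
    Continuous (piN N) ∧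
    Function.Injective (piN N) ∧
    (∀ s t : ℝ, piN N (s + t) = piN N s * piN N t) ∧
    (∀ t : ℝ, piN N t ∈ solenoid N) ∧
    Set.range (fun t : ℝ =>
        (⟨piN N t, piN_mem N (fun j => le_trans one_le_two (hN j)) t⟩ : solenoid N)) =
      pathComponent (1 : solenoid N) :=
  have hN₁ : ∀ j, 1 ≤ N j := fun j => one_le_two.trans (hN j)
  ⟨continuous_piN N, piN_injective N hN, piN_add N, piN_mem N hN₁,
    range_piN_eq_pathComponent N hN₁⟩

end SolenoidPaper
end

section
/- For r = m/(n₁⋯n_j) with m ∈ ℤ, the map χ_r : Σ_N → S¹ given by x ↦ (p_{j+1}(x))^m is a continuous group homomorphism satisfying χ_r(π_N(t)) = exp(2πirt) for all t ∈ ℝ. -/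
open Real

namespace SolenoidPaper

/-- The character `χ_r`, `r = m / (n₀ ⋯ n_{j-1})`; coordinates are indexed from `0`, so the
paper's `p_{j+1}` is evaluation at `j`. -/
noncomputable def solenoidCharacter (N : ℕ → ℕ) (j : ℕ) (m : ℤ) :
    ContinuousMonoidHom (solenoid N) Circle where
  toMonoidHom := (zpowGroupHom m).comp ((Pi.evalMonoidHom _ j).comp (solenoid N).subtype)
  continuous_toFun := ((continuous_apply j).comp continuous_subtype_val).zpow m

lemma piN_apply_zpow (N : ℕ → ℕ) (j : ℕ) (m : ℤ) (t : ℝ) :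
    piN N t j ^ m = Circle.exp (2 * π * ((m : ℝ) / ∏ i ∈ Finset.range j, (N i : ℝ)) * t) := by
  rw [piN, ← Circle.exp_intCast_mul]
  congr 1
  ring

theorem character_continuous_hom_comp_piN_general
    (N : ℕ → ℕ) (j : ℕ) (m : ℤ) :
    Continuous (fun x : solenoid N => (x : ∀ _ : ℕ, Circle) j ^ m) ∧
    (∀ x y : solenoid N,
      ((x * y : solenoid N) : ∀ _ : ℕ, Circle) j ^ m =
        (x : ∀ _ : ℕ, Circle) j ^ m * (y : ∀ _ : ℕ, Circle) j ^ m) ∧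
    (∀ t : ℝ, piN N t j ^ m =
      Circle.exp (2 * π * ((m : ℝ) / ∏ i ∈ Finset.range j, (N i : ℝ)) * t)) :=
  ⟨(solenoidCharacter N j m).continuous, map_mul (solenoidCharacter N j m),
    piN_apply_zpow N j m⟩

/-- For `r = m/(n₀⋯n_{j-1})`, the character `χ_r : Σ_N → S¹`, `x ↦ (x j)^m`, is a continuous
group homomorphism with `χ_r (π_N t) = exp (2πirt)`. -/
theorem character_continuous_hom_comp_piN
    (N : ℕ → ℕ) (hN : ∀ j, 2 ≤ N j) (j : ℕ) (m : ℤ) :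
    Continuous (fun x : solenoid N => (x : ∀ _ : ℕ, Circle) j ^ m) ∧
    (∀ x y : solenoid N,
      ((x * y : solenoid N) : ∀ _ : ℕ, Circle) j ^ m =
        (x : ∀ _ : ℕ, Circle) j ^ m * (y : ∀ _ : ℕ, Circle) j ^ m) ∧
    (∀ t : ℝ, piN N t j ^ m =
      Circle.exp (2 * π * ((m : ℝ) / ∏ i ∈ Finset.range j, (N i : ℝ)) * t)) :=
  character_continuous_hom_comp_piN_general N j m

end SolenoidPaper
end
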